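/- The function f(x) = PTSoftplus(x) − Softplus(x) is monotonically increasing on ℝ, i.e., f'(x) ≥ 0 for all x (equivalently f is monotone). -/
import Mathlib

noncomputable section
open Real Filter

def xc : ℝ := Real.logb 2 (1 / Real.log 2)
def Cs : ℝ := 1 / Real.log 2 - xc
def PTSoftplus (x : ℝ) : ℝ := if x < xc then (2:ℝ) ^ x else x + Cs
def softplus (x : ℝ) : ℝ := Real.log (1 + Real.exp x)

lemma log2_gt_half : (1:ℝ)/2 < Real.log 2 := by
  have := Real.log_two_gt_d9; linarith

lemma log2_lt_one : Real.log 2 < 1 := by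
  have := Real.log_two_lt_d9; linarith

lemma key (x : ℝ) : Real.exp x ≤ Real.log 2 * (2:ℝ) ^ x * (1 + Real.exp x) := by
  set l := Real.log 2 with hl
  have hl0 : 0 < l := by have := log2_gt_half; linarith
  have hl1 : l < 1 := log2_lt_one
  have hlh : (1:ℝ)/2 < l := log2_gt_half
  have h2x : (2:ℝ) ^ x = Real.exp (l * x) := by
    rw [Real.rpow_def_of_pos (by norm_num)]
  set A := Real.exp (l * x) with hA
  set B := Real.exp ((l + 1) * x) with hB
  have hA0 : 0 < A := Real.exp_pos _
  have hB0 : 0 < B := Real.exp_pos _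
  have hAB : (2:ℝ) ^ x * (1 + Real.exp x) = A + B := by
    rw [h2x, hA, hB, mul_add, mul_one, ← Real.exp_add]
    ring_nf
  have hl1' : (0:ℝ) ≤ 1 - l := by linarith
  have hd1 : (0:ℝ) ≤ A / l := div_nonneg hA0.le hl0.le
  have hd2 : (0:ℝ) ≤ B / (1 - l) := div_nonneg hB0.le hl1'
  have hw : l + (1 - l) = 1 := by ring
  have hgm := Real.geom_mean_le_arith_mean2_weighted hl0.le hl1' hd1 hd2 hw
  -- compute the geometric mean
  have hexp : ∀ t s : ℝ, Real.exp t ^ s = Real.exp (t * s) := by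
    intro t s
    rw [Real.rpow_def_of_pos (Real.exp_pos t), Real.log_exp]
  have hne : (1:ℝ) - l ≠ 0 := by linarith
  have hArith : l * (A / l) + (1 - l) * (B / (1 - l)) = A + B := by
    field_simp
  have hGeom : (A / l) ^ l * (B / (1 - l)) ^ (1 - l)
      = Real.exp x / (l ^ l * (1 - l) ^ (1 - l)) := by
    rw [Real.div_rpow hA0.le hl0.le, Real.div_rpow hB0.le (by linarith), hA, hB,
      hexp, hexp]
    have : l * x * l + (l + 1) * x * (1 - l) = x := by ring
    rw [div_mul_div_comm, ← Real.exp_add, this]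
  rw [hArith, hGeom] at hgm
  have hpow0 : 0 < l ^ l * (1 - l) ^ (1 - l) :=
    mul_pos (Real.rpow_pos_of_pos hl0 _) (Real.rpow_pos_of_pos (by linarith) _)
  have hkey2 : Real.exp x ≤ l * (A + B) := by
    have h1 : (1:ℝ) ≤ (l / (1 - l)) ^ (1 - l) :=
      Real.one_le_rpow (by rw [le_div_iff₀ (by linarith)]; linarith) (by linarith)
    have h2 : l / (l ^ l * (1 - l) ^ (1 - l)) = (l / (1 - l)) ^ (1 - l) := by
      rw [Real.div_rpow hl0.le hl1', Real.rpow_sub hl0, Real.rpow_one, div_div]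
    have h3 : Real.exp x ≤ l * (Real.exp x / (l ^ l * (1 - l) ^ (1 - l))) := by
      have he : l * (Real.exp x / (l ^ l * (1 - l) ^ (1 - l)))
          = Real.exp x * (l / (l ^ l * (1 - l) ^ (1 - l))) := by ring
      rw [he, h2]
      nlinarith [Real.exp_pos x, h1]
    exact h3.trans (mul_le_mul_of_nonneg_left hgm hl0.le)
  rw [mul_assoc, hAB]
  exact hkey2

lemma softplus_hasDeriv (x : ℝ) :
    HasDerivAt softplus (Real.exp x / (1 + Real.exp x)) x := by
  have h1 : HasDerivAt (fun x : ℝ => 1 + Real.exp x) (Real.exp x) x :=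
    (Real.hasDerivAt_exp x).const_add 1
  exact h1.log (by positivity)

lemma mono1 : Monotone (fun x : ℝ => (2:ℝ) ^ x - softplus x) := by
  have hd : ∀ x : ℝ, HasDerivAt (fun x : ℝ => (2:ℝ) ^ x - softplus x)
      ((2:ℝ) ^ x * Real.log 2 - Real.exp x / (1 + Real.exp x)) x := by
    intro x
    exact ((Real.hasStrictDerivAt_const_rpow (by norm_num) x).hasDerivAt).sub
      (softplus_hasDeriv x)
  apply monotone_of_deriv_nonneg (fun x => (hd x).differentiableAt)
  intro x
  rw [(hd x).deriv]
  have h := key x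
  have hpos : 0 < 1 + Real.exp x := by positivity
  rw [sub_nonneg, div_le_iff₀ hpos]
  nlinarith [h]

lemma mono2 : Monotone (fun x : ℝ => x + Cs - softplus x) := by
  have hd : ∀ x : ℝ, HasDerivAt (fun x : ℝ => x + Cs - softplus x)
      (1 - Real.exp x / (1 + Real.exp x)) x := by
    intro x
    exact ((hasDerivAt_id x).add_const Cs).sub (softplus_hasDeriv x)
  apply monotone_of_deriv_nonneg (fun x => (hd x).differentiableAt)
  intro x
  rw [(hd x).deriv]
  have hpos : 0 < 1 + Real.exp x := by positivity
  rw [sub_nonneg, div_le_one hpos]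
  linarith

lemma eq_at_xc : (2:ℝ) ^ xc = xc + Cs := by
  have hl0 : 0 < Real.log 2 := by have := log2_gt_half; linarith
  rw [Cs, xc]
  rw [Real.rpow_logb (by norm_num) (by norm_num) (by positivity)]
  ring

theorem f_monotone : Monotone (fun x => PTSoftplus x - softplus x) := by
  intro a b hab
  simp only [PTSoftplus]
  by_cases hb : b < xc
  · have ha : a < xc := lt_of_le_of_lt hab hb
    simp only [if_pos ha, if_pos hb]
    exact mono1 hab
  · by_cases ha : a < xc
    · simp only [if_pos ha, if_neg hb]
      have h1 : (2:ℝ) ^ a - softplus a ≤ (2:ℝ) ^ xc - softplus xc := mono1 ha.le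
      have h2 : xc + Cs - softplus xc ≤ b + Cs - softplus b := mono2 (not_lt.mp hb)
      rw [eq_at_xc] at h1
      linarith
    · simp only [if_neg ha, if_neg hb]
      exact mono2 hab
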